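/- Correspondence for omniscience: for any graph-based L-frame F = (Z,E,R_□,R_◇), the sequent p ⊢ □p is valid in F if and only if R_□ ⊆ E (R_□ is sub-E). -/
import Mathlib


/-- `T^{[1]}[U] = {v ∈ Z | ∀ u ∈ U, ¬ (u T v)}`. -/
def rOne {Z : Type*} (T : Z → Z → Prop) (U : Set Z) : Set Z := {v | ∀ u ∈ U, ¬ T u v}

/-- `T^{[0]}[V] = {u ∈ Z | ∀ v ∈ V, ¬ (u T v)}`. -/
def rZero {Z : Type*} (T : Z → Z → Prop) (V : Set Z) : Set Z := {u | ∀ v ∈ V, ¬ T u v}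

/-- `R` is `E`-compatible: for all `b, y`,
`(R^{[0]}[{y}])^{[10]} ⊆ R^{[0]}[{y}]` and `(R^{[1]}[{b}])^{[01]} ⊆ R^{[1]}[{b}]`. -/
def ECompat {Z : Type*} (E R : Z → Z → Prop) : Prop :=
  (∀ y : Z, rZero E (rOne E (rZero R {y})) ⊆ rZero R {y}) ∧
  (∀ b : Z, rOne E (rZero E (rOne R {b})) ⊆ rOne R {b})

/-- A concept of the graph `(Z,E)`: a pair `(B,Y)` with `Y = B^{[1]}` and `B = Y^{[0]}`. -/
def isConcept {Z : Type*} (E : Z → Z → Prop) (c : Set Z × Set Z) : Prop :=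
  c.2 = rOne E c.1 ∧ c.1 = rZero E c.2

/-- `[R](B,Y) = (R^{[0]}[Y], (R^{[0]}[Y])^{[1]})`. -/
def boxMap {Z : Type*} (E R : Z → Z → Prop) (c : Set Z × Set Z) : Set Z × Set Z :=
  (rZero R c.2, rOne E (rZero R c.2))

/-- `⟨R⟩(B,Y) = ((R^{[0]}[B])^{[0]}, R^{[0]}[B])`. -/
def diaMap {Z : Type*} (E R : Z → Z → Prop) (c : Set Z × Set Z) : Set Z × Set Z :=
  (rZero E (rZero R c.1), rZero R c.1)

/-- Formulas of the basic normal non-distributive modal language `L`. -/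
inductive Fm : Type
  | bot : Fm
  | top : Fm
  | var : ℕ → Fm
  | conj : Fm → Fm → Fm
  | disj : Fm → Fm → Fm
  | box : Fm → Fm
  | dia : Fm → Fm

/-- Satisfaction (`.1`) and co-satisfaction/refutation (`.2`) at states, defined by
simultaneous recursion on the formula. -/
def sat {Z : Type*} (E Rb Rd : Z → Z → Prop) (V : ℕ → Set Z × Set Z) :
    Fm → (Z → Prop) × (Z → Prop)
  | .bot => (fun _ => False, fun _ => True)
  | .top => (fun _ => True, fun _ => False)
  | .var n => (fun z => z ∈ (V n).1, fun z => ∀ z', E z' z → z' ∉ (V n).1)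
  | .conj φ ψ =>
      (fun z => (sat E Rb Rd V φ).1 z ∧ (sat E Rb Rd V ψ).1 z,
       fun z => ∀ z', E z' z → ¬ ((sat E Rb Rd V φ).1 z' ∧ (sat E Rb Rd V ψ).1 z'))
  | .disj φ ψ =>
      (fun z => ∀ z', E z z' → ¬ ((sat E Rb Rd V φ).2 z' ∧ (sat E Rb Rd V ψ).2 z'),
       fun z => (sat E Rb Rd V φ).2 z ∧ (sat E Rb Rd V ψ).2 z)
  | .box φ =>
      (fun z => ∀ z', Rb z z' → ¬ (sat E Rb Rd V φ).2 z',
       fun z => ∀ z', E z' z → ¬ (∀ z'', Rb z' z'' → ¬ (sat E Rb Rd V φ).2 z''))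
  | .dia φ =>
      (fun z => ∀ z', E z z' → ¬ (∀ z'', Rd z' z'' → ¬ (sat E Rb Rd V φ).1 z''),
       fun z => ∀ z', Rd z z' → ¬ (sat E Rb Rd V φ).1 z')

/-- A graph-based `L`-frame: a reflexive graph `(Z,E)` with `E`-compatible `R_□`, `R_◇`. -/
structure GFrame (Z : Type*) where
  E : Z → Z → Prop
  Rb : Z → Z → Prop
  Rd : Z → Z → Prop
  nonempty : Nonempty Z
  refl : ∀ z : Z, E z z
  compatB : ECompat E Rb
  compatD : ECompat E Rd

/-- The sequent `φ ⊢ ψ` is true in the model `(F, V)`. -/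
def trueIn {Z : Type*} (F : GFrame Z) (V : ℕ → Set Z × Set Z) (φ ψ : Fm) : Prop :=
  ∀ z z' : Z, (sat F.E F.Rb F.Rd V φ).1 z → (sat F.E F.Rb F.Rd V ψ).2 z' → ¬ F.E z z'

/-- The sequent `φ ⊢ ψ` is valid in the frame `F`: true in every model based on `F`,
i.e. for every valuation sending proposition letters to concepts. -/
def validIn {Z : Type*} (F : GFrame Z) (φ ψ : Fm) : Prop :=
  ∀ V : ℕ → Set Z × Set Z, (∀ n, isConcept F.E (V n)) → trueIn F V φ ψ

lemma subset_rZero_rOne {Z : Type*} (E : Z → Z → Prop) (U : Set Z) :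
    U ⊆ rZero E (rOne E U) := fun u hu v hv => hv u hu

lemma subset_rOne_rZero {Z : Type*} (E : Z → Z → Prop) (V : Set Z) :
    V ⊆ rOne E (rZero E V) := fun v hv u hu => hu v hv

lemma rZero_anti {Z : Type*} (E : Z → Z → Prop) {U V : Set Z} (h : U ⊆ V) :
    rZero E V ⊆ rZero E U := fun z hz v hv => hz v (h hv)

lemma rOne_anti {Z : Type*} (E : Z → Z → Prop) {U V : Set Z} (h : U ⊆ V) :
    rOne E V ⊆ rOne E U := fun z hz v hv => hz v (h hv)

lemma compat_set {Z : Type*} {E R : Z → Z → Prop} (h : ECompat E R) (Y : Set Z) :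
    rZero E (rOne E (rZero R Y)) ⊆ rZero R Y := by
  intro z hz y hy
  have h1 : rZero R Y ⊆ rZero R {y} :=
    rZero_anti R (by simpa using hy : ({y} : Set Z) ⊆ Y)
  have h2 : rZero E (rOne E (rZero R Y)) ⊆ rZero E (rOne E (rZero R {y})) :=
    rZero_anti E (rOne_anti E h1)
  exact h.1 y (h2 hz) y rfl

/-- Correspondence for omniscience: `p ⊢ □p` is valid in `F` iff `R_□ ⊆ E`. -/
theorem stmt14 {Z : Type*} (F : GFrame Z) :
    validIn F (.var 0) (.box (.var 0)) ↔ ∀ a x : Z, F.Rb a x → F.E a x := by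
  constructor
  · -- validity implies Rb ⊆ E
    intro hval a x hRb
    by_contra hnE
    set B : Set Z := rZero F.E {x} with hB
    set Y : Set Z := rOne F.E B with hY
    set S : Set Z := rZero F.Rb Y with hS
    have hconc : isConcept F.E (B, Y) := by
      refine ⟨rfl, ?_⟩
      apply Set.Subset.antisymm (subset_rZero_rOne F.E B)
      exact rZero_anti F.E (subset_rOne_rZero F.E {x})
    have ht := hval (fun _ => (B, Y)) (fun _ => hconc)
    have haB : a ∈ B := by
      intro v hv
      simp only [Set.mem_singleton_iff] at hv
      subst hv; exact hnE
    have hxY : x ∈ Y := subset_rOne_rZero F.E {x} rfl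
    have haS : a ∉ S := fun h => h x hxY hRb
    have haC : a ∉ rZero F.E (rOne F.E S) := fun h => haS (compat_set F.compatB Y h)
    simp only [rZero, rOne, Set.mem_setOf_eq, not_forall] at haC
    obtain ⟨z', hz'S, hEaz'⟩ := haC
    refine ht a z' ?_ ?_ (not_not.mp hEaz')
    · simpa [sat] using haB
    · -- z' co-satisfies the boxed formula
      simp only [sat]
      intro z'' hEz'' hbox
      refine hz'S z'' ?_ hEz''
      intro w hwY hRbw
      exact hbox w hRbw (fun u hEu huB => hwY u huB hEu)
  · -- Rb ⊆ E implies validity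
    intro h V hV z z' hz hz' hE
    simp only [sat] at hz hz'
    have h1 := hz' z hE
    push_neg at h1
    obtain ⟨w, hRbw, hcw⟩ := h1
    exact hcw z (h z w hRbw) hz
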